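/- arXiv:2108.08620 — 5 statements merged into one kernel-verified Lean document; each statement's English description precedes it below -/
import Mathlib

section
/- For a complex number q with |q| < 1 and x with |x| < 1, the series ∑_{l≥1} x^l/(l(1-q^l)) converges and exp(∑_{l≥1} x^l/(l(1-q^l))) = 1/∏_{r≥0}(1 - q^r x), i.e. equals the reciprocal of the q-Pochhammer symbol (x;q)_∞. -/
/-!
Expanding `1 / (1 - q^(l+1))` as a geometric series turns the series into the absolutely
convergent double series `∑_{l,r} (q^r x)^(l+1) / (l+1)`. Summing it over `l` first gives
`∑_r -log (1 - q^r x)`, and exponentiating this sum yields `∏_r (1 - q^r x)⁻¹`.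
-/

theorem HasSum.prod_fiberwise_swap {α β γ : Type*} [AddCommMonoid α] [TopologicalSpace α]
    [ContinuousAdd α] [RegularSpace α] {f : β × γ → α} {g : γ → α} {a : α} (ha : HasSum f a)
    (hf : ∀ c, HasSum (fun b ↦ f (b, c)) (g c)) : HasSum g a :=
  ((Equiv.prodComm γ β).hasSum_iff.mpr ha).prod_fiberwise hf

theorem Complex.hasProd_of_hasSum_neg_log {ι : Type*} {f : ι → ℂ} {a : ℂ} (hf : ∀ i, f i ≠ 0)
    (h : HasSum (fun i ↦ -Complex.log (f i)) a) : HasProd f (Complex.exp (-a)) := by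
  convert h.neg.cexp
  ext i
  simp [Complex.exp_log (hf i)]

theorem norm_pow_mul_lt_one {q x : ℂ} (hq : ‖q‖ ≤ 1) (hx : ‖x‖ < 1) (r : ℕ) :
    ‖q ^ r * x‖ < 1 :=
  calc ‖q ^ r * x‖ = ‖q‖ ^ r * ‖x‖ := by rw [norm_mul, norm_pow]
    _ ≤ ‖x‖ := mul_le_of_le_one_left (norm_nonneg x) (pow_le_one₀ (norm_nonneg q) hq)
    _ < 1 := hx

noncomputable def logQPochhammerTerm (q x : ℂ) (p : ℕ × ℕ) : ℂ :=
  (q ^ p.2 * x) ^ (p.1 + 1) / ((p.1 : ℂ) + 1)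

theorem norm_logQPochhammerTerm_le {q : ℂ} (hq : ‖q‖ ≤ 1) (x : ℂ) (p : ℕ × ℕ) :
    ‖logQPochhammerTerm q x p‖ ≤ ‖x‖ ^ (p.1 + 1) * ‖q‖ ^ p.2 := by
  obtain ⟨l, r⟩ := p
  have hden : 1 ≤ ‖(l : ℂ) + 1‖ := by
    rw [← Nat.cast_succ, Complex.norm_natCast]
    exact_mod_cast l.succ_pos
  have hqr : (‖q‖ ^ r) ^ (l + 1) ≤ ‖q‖ ^ r :=
    pow_le_of_le_one (by positivity) (pow_le_one₀ (norm_nonneg q) hq) l.succ_ne_zero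
  calc ‖logQPochhammerTerm q x (l, r)‖
      = (‖q‖ ^ r) ^ (l + 1) * ‖x‖ ^ (l + 1) / ‖(l : ℂ) + 1‖ := by
        simp only [logQPochhammerTerm, norm_div, norm_pow, norm_mul, mul_pow]
    _ ≤ (‖q‖ ^ r) ^ (l + 1) * ‖x‖ ^ (l + 1) := div_le_self (by positivity) hden
    _ ≤ ‖x‖ ^ (l + 1) * ‖q‖ ^ r := by rw [mul_comm]; gcongr

theorem summable_logQPochhammerTerm {q x : ℂ} (hq : ‖q‖ < 1) (hx : ‖x‖ < 1) :
    Summable (logQPochhammerTerm q x) := by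
  refine Summable.of_norm_bounded ?_ (norm_logQPochhammerTerm_le hq.le x)
  have hxl : Summable fun l : ℕ ↦ ‖x‖ ^ (l + 1) :=
    (summable_nat_add_iff 1).mpr (summable_geometric_of_lt_one (norm_nonneg x) hx)
  exact hxl.mul_of_nonneg (summable_geometric_of_lt_one (norm_nonneg q) hq)
    (fun _ ↦ by positivity) (fun _ ↦ by positivity)

theorem hasSum_logQPochhammerTerm_left {q : ℂ} (hq : ‖q‖ < 1) (x : ℂ) (l : ℕ) :
    HasSum (fun r ↦ logQPochhammerTerm q x (l, r))
      (x ^ (l + 1) / (((l : ℂ) + 1) * (1 - q ^ (l + 1)))) := by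
  have hql : ‖q ^ (l + 1)‖ < 1 := by
    rw [norm_pow]
    exact pow_lt_one₀ (norm_nonneg q) hq l.succ_ne_zero
  rw [← div_div, div_eq_mul_inv]
  refine ((hasSum_geometric_of_norm_lt_one hql).mul_left _).congr_fun fun r ↦ ?_
  simp only [logQPochhammerTerm]
  ring

theorem hasSum_logQPochhammerTerm_right {q x : ℂ} (hq : ‖q‖ ≤ 1) (hx : ‖x‖ < 1) (r : ℕ) :
    HasSum (fun l ↦ logQPochhammerTerm q x (l, r)) (-Complex.log (1 - q ^ r * x)) := by
  simpa only [logQPochhammerTerm] using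
    Complex.hasSum_taylorSeries_neg_log' (norm_pow_mul_lt_one hq hx r)

/-- For `‖q‖ < 1` and `‖x‖ < 1`, the series `∑_{l≥1} x^l/(l(1-q^l))` converges and its
exponential equals the reciprocal of the q-Pochhammer symbol `(x;q)_∞ = ∏_{r≥0}(1-q^r x)`. -/
theorem stmt0 (q x : ℂ) (hq : ‖q‖ < 1) (hx : ‖x‖ < 1) :
    Summable (fun l : ℕ => x ^ (l + 1) / (((l : ℂ) + 1) * (1 - q ^ (l + 1)))) ∧
      Complex.exp (∑' l : ℕ, x ^ (l + 1) / (((l : ℂ) + 1) * (1 - q ^ (l + 1)))) =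
        1 / ∏' r : ℕ, (1 - q ^ r * x) := by
  have hdouble := (summable_logQPochhammerTerm hq hx).hasSum
  have hsum := hdouble.prod_fiberwise (hasSum_logQPochhammerTerm_left hq x)
  have hfactor_ne (r : ℕ) : 1 - q ^ r * x ≠ 0 :=
    sub_ne_zero.mpr fun h ↦ by simpa [← h] using norm_pow_mul_lt_one hq.le hx r
  have hprod := Complex.hasProd_of_hasSum_neg_log hfactor_ne
    (hdouble.prod_fiberwise_swap (hasSum_logQPochhammerTerm_right hq.le hx))
  refine ⟨hsum.summable, ?_⟩
  rw [hsum.tsum_eq, hprod.tprod_eq, Complex.exp_neg, one_div, inv_inv]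
end

section
/- For a complex number q with |q| > 1 and x with |x| < |q|, exp(∑_{l≥1} x^l/(l(1-q^l))) = ∏_{r≥0}(1 - q^{-r-1} x) = (q^{-1}x; q^{-1})_∞. -/
/-!
Write `p = q⁻¹`. Since `‖p ^ (r + 1) x‖ < 1`, the Taylor series of the logarithm gives
`log (1 - p ^ (r + 1) x) = -∑ₗ (p ^ (r + 1) x) ^ (l + 1) / (l + 1)`. The double series over `(r, l)`
converges absolutely, so it may be summed over `r` first: this is a geometric series in `p ^ (l + 1)`,
with sum `(p x) ^ (l + 1) / ((l + 1) (1 - p ^ (l + 1))) = -x ^ (l + 1) / ((l + 1) (1 - q ^ (l + 1)))`.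
Hence `∑ᵣ log (1 - p ^ (r + 1) x)` is the exponent on the left, and exponentiating gives the product.
-/

lemma pow_succ_mul_pow_succ_eq {M : Type*} [CommMonoid M] (p x : M) (r l : ℕ) :
    (p ^ (r + 1) * x) ^ (l + 1) = (p * x) ^ (l + 1) * (p ^ (l + 1)) ^ r := by
  rw [mul_pow, mul_pow, ← pow_mul, ← pow_mul, mul_right_comm, ← pow_add]
  congr 2
  ring

lemma pow_div_mul_one_sub_pow_eq_neg_inv {K : Type*} [Field K] {q : K} (hq : q ≠ 0) {n : ℕ}
    (hqn : 1 - q ^ n ≠ 0) (x c : K) :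
    x ^ n / (c * (1 - q ^ n)) = -((q⁻¹ * x) ^ n / (c * (1 - q⁻¹ ^ n))) := by
  have hQ : q ^ n ≠ 0 := pow_ne_zero _ hq
  rw [mul_pow, inv_pow]
  generalize q ^ n = Q at *
  rw [show 1 - Q⁻¹ = -((1 - Q) / Q) by field_simp; ring]
  field_simp

namespace Complex

variable {p x : ℂ}

lemma norm_pow_succ_mul_lt_one (hp : ‖p‖ ≤ 1) (hpx : ‖p * x‖ < 1) (r : ℕ) :
    ‖p ^ (r + 1) * x‖ < 1 := by
  rw [pow_succ, mul_assoc, norm_mul, norm_pow]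
  calc ‖p‖ ^ r * ‖p * x‖ ≤ 1 * ‖p * x‖ := by gcongr; exact pow_le_one₀ (norm_nonneg p) hp
    _ < 1 := by rwa [one_mul]

lemma summable_pow_succ_mul_pow_succ_div (hp : ‖p‖ < 1) (hpx : ‖p * x‖ < 1) :
    Summable fun rl : ℕ × ℕ => (p ^ (rl.1 + 1) * x) ^ (rl.2 + 1) / ((rl.2 : ℂ) + 1) := by
  have hgeom : Summable fun rl : ℕ × ℕ => ‖p‖ ^ rl.1 * ‖p * x‖ ^ rl.2 :=
    (summable_geometric_of_lt_one (norm_nonneg _) hp).mul_of_nonneg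
      (summable_geometric_of_lt_one (norm_nonneg _) hpx) (fun _ => by positivity)
      (fun _ => by positivity)
  refine Summable.of_norm_bounded hgeom fun ⟨r, l⟩ => ?_
  have hl : (1 : ℝ) ≤ ‖(l : ℂ) + 1‖ := by norm_cast; simp
  rw [pow_succ_mul_pow_succ_eq, norm_div, norm_mul, norm_pow, norm_pow, norm_pow, mul_comm]
  calc (‖p‖ ^ (l + 1)) ^ r * ‖p * x‖ ^ (l + 1) / ‖(l : ℂ) + 1‖
      ≤ (‖p‖ ^ (l + 1)) ^ r * ‖p * x‖ ^ (l + 1) := div_le_self (by positivity) hl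
    _ ≤ ‖p‖ ^ r * ‖p * x‖ ^ l :=
      mul_le_mul (pow_le_pow_left₀ (by positivity) (pow_le_of_le_one (norm_nonneg _) hp.le
        l.succ_ne_zero) r) (pow_le_pow_of_le_one (norm_nonneg _) hpx.le l.le_succ)
        (by positivity) (by positivity)

lemma hasSum_pow_succ_mul_pow_succ_div (hp : ‖p‖ < 1) (l : ℕ) :
    HasSum (fun r : ℕ => (p ^ (r + 1) * x) ^ (l + 1) / ((l : ℂ) + 1))
      ((p * x) ^ (l + 1) / (((l : ℂ) + 1) * (1 - p ^ (l + 1)))) := by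
  have hpl : ‖p ^ (l + 1)‖ < 1 := by
    rw [norm_pow]; exact pow_lt_one₀ (norm_nonneg _) hp l.succ_ne_zero
  simp_rw [pow_succ_mul_pow_succ_eq]
  rw [mul_comm ((l : ℂ) + 1), ← div_div, div_eq_mul_inv ((p * x) ^ (l + 1))]
  exact ((hasSum_geometric_of_norm_lt_one hpl).mul_left _).div_const _

lemma hasSum_log_one_sub_pow_succ_mul (hp : ‖p‖ < 1) (hpx : ‖p * x‖ < 1) :
    HasSum (fun r : ℕ => log (1 - p ^ (r + 1) * x))
      (-∑' l : ℕ, (p * x) ^ (l + 1) / (((l : ℂ) + 1) * (1 - p ^ (l + 1)))) := by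
  have hsum := (summable_pow_succ_mul_pow_succ_div hp hpx).hasSum
  have hrow (r : ℕ) : HasSum (fun l : ℕ => (p ^ (r + 1) * x) ^ (l + 1) / ((l : ℂ) + 1))
      (-log (1 - p ^ (r + 1) * x)) :=
    hasSum_taylorSeries_neg_log' (norm_pow_succ_mul_lt_one hp.le hpx r)
  have hrows := hsum.prod_fiberwise hrow
  have hcols := ((Equiv.prodComm ℕ ℕ).hasSum_iff.mpr hsum).prod_fiberwise
    (hasSum_pow_succ_mul_pow_succ_div (x := x) hp)
  rw [hcols.tsum_eq]
  simpa using hrows.neg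

lemma hasProd_one_sub_pow_succ_mul (hp : ‖p‖ < 1) (hpx : ‖p * x‖ < 1) :
    HasProd (fun r : ℕ => 1 - p ^ (r + 1) * x)
      (exp (-∑' l : ℕ, (p * x) ^ (l + 1) / (((l : ℂ) + 1) * (1 - p ^ (l + 1))))) := by
  refine hasProd_of_hasSum_log (fun r h => ?_) (hasSum_log_one_sub_pow_succ_mul hp hpx)
  have := norm_pow_succ_mul_lt_one hp.le hpx r
  rw [← sub_eq_zero.mp h, norm_one] at this
  exact this.false

end Complex

/-- For `‖q‖ > 1` and `‖x‖ < ‖q‖`,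
`exp(∑_{l≥1} x^l/(l(1-q^l))) = ∏_{r≥0}(1 - q^{-r-1} x) = (q⁻¹ x; q⁻¹)_∞`. -/
theorem stmt1 (q x : ℂ) (hq : 1 < ‖q‖) (hx : ‖x‖ < ‖q‖) :
    Complex.exp (∑' l : ℕ, x ^ (l + 1) / (((l : ℂ) + 1) * (1 - q ^ (l + 1)))) =
      ∏' r : ℕ, (1 - q⁻¹ ^ (r + 1) * x) := by
  have hq0 : q ≠ 0 := norm_pos_iff.mp (one_pos.trans hq)
  have hp : ‖q⁻¹‖ < 1 := by rw [norm_inv]; exact inv_lt_one_of_one_lt₀ hq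
  have hpx : ‖q⁻¹ * x‖ < 1 := by
    rw [norm_mul, norm_inv, inv_mul_lt_one₀ (one_pos.trans hq)]; exact hx
  have hqn (l : ℕ) : 1 - q ^ (l + 1) ≠ 0 := by
    refine sub_ne_zero.mpr fun h => ?_
    have := one_lt_pow₀ hq l.succ_ne_zero
    rw [← norm_pow, ← h, norm_one] at this
    exact this.false
  rw [tsum_congr fun l => pow_div_mul_one_sub_pow_eq_neg_inv hq0 (hqn l) x _, tsum_neg]
  exact (Complex.hasProd_one_sub_pow_succ_mul hp hpx).tprod_eq.symm
end

section
/- Let q > 1 be real. The Jackson integral representation Γ_{q^{-1}}(p) = (1−q^{-1})^{1−p} · ∑_{d∈ℤ} q^d E_{q^{-1}}(q^d/(1−q)) q^{dp} / q^d holds for real p > 0; i.e. Γ_{q^{-1}}(p) = (1−q^{-1})^{1−p} ∑_{d∈ℤ} E_{q^{-1}}(q^d/(1−q)) q^{dp}. -/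
/-!
Put `Q = q⁻¹` and `z = q^{-p}`. For `d > 0` the `d`-th term of the Jackson sum vanishes, because
the product `(Q q^d; Q)_∞` contains the factor `1 - Q^d q^d = 0`; for `d = -n` the term is
`(Q; Q)_∞ zⁿ / (Q; Q)ₙ`. The claim thus reduces to Euler's identity
`∑ₙ zⁿ / (Q; Q)ₙ = 1 / (z; Q)_∞`. Its left side `S(z)` satisfies `S(Qz) = (1 - z) S(z)`, hence
`S(Qⁿz) = S(z) (z; Q)ₙ`; letting `n → ∞` and using `S(w) → S(0) = 1` as `w → 0` gives
`1 = S(z) (z; Q)_∞`.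
-/

open Filter Topology Finset

noncomputable section

/-- `(w; Q)ₙ`. -/
def qPochhammer (w Q : ℝ) (n : ℕ) : ℝ := ∏ k ∈ range n, (1 - Q ^ k * w)

/-- `(w; Q)_∞`. -/
def qPochhammerInf (w Q : ℝ) : ℝ := ∏' k : ℕ, (1 - Q ^ k * w)

def eulerSeries (Q w : ℝ) : ℝ := ∑' n : ℕ, w ^ n / qPochhammer Q Q n

end

section QPochhammer

variable {Q w : ℝ}

@[simp]
lemma qPochhammer_zero (w Q : ℝ) : qPochhammer w Q 0 = 1 :=
  prod_range_zero _

lemma qPochhammer_succ (w Q : ℝ) (n : ℕ) :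
    qPochhammer w Q (n + 1) = qPochhammer w Q n * (1 - Q ^ n * w) :=
  prod_range_succ _ _

lemma one_sub_pow_mul_pos (hQ0 : 0 ≤ Q) (hQ1 : Q ≤ 1) (hw : |w| < 1) (k : ℕ) :
    0 < 1 - Q ^ k * w := by
  have : Q ^ k * w ≤ |w| :=
    calc Q ^ k * w ≤ Q ^ k * |w| := mul_le_mul_of_nonneg_left (le_abs_self w) (pow_nonneg hQ0 k)
      _ ≤ |w| := mul_le_of_le_one_left (abs_nonneg w) (pow_le_one₀ hQ0 hQ1)
  linarith

lemma qPochhammer_pos (hQ0 : 0 ≤ Q) (hQ1 : Q ≤ 1) (hw : |w| < 1) (n : ℕ) :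
    0 < qPochhammer w Q n :=
  prod_pos fun k _ => one_sub_pow_mul_pos hQ0 hQ1 hw k

lemma summable_pow_mul (hQ0 : 0 ≤ Q) (hQ1 : Q < 1) (w : ℝ) :
    Summable fun k : ℕ => Q ^ k * w :=
  (summable_geometric_of_lt_one hQ0 hQ1).mul_right w

lemma multipliable_one_sub_pow_mul (hQ0 : 0 ≤ Q) (hQ1 : Q < 1) (w : ℝ) :
    Multipliable fun k : ℕ => 1 - Q ^ k * w := by
  simpa only [sub_eq_add_neg] using
    Real.multipliable_one_add_of_summable (summable_pow_mul hQ0 hQ1 w).neg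

lemma tendsto_qPochhammer (hQ0 : 0 ≤ Q) (hQ1 : Q < 1) (w : ℝ) :
    Tendsto (qPochhammer w Q) atTop (𝓝 (qPochhammerInf w Q)) :=
  (multipliable_one_sub_pow_mul hQ0 hQ1 w).tendsto_prod_tprod_nat

lemma qPochhammer_mul_qPochhammerInf (hQ0 : 0 ≤ Q) (hQ1 : Q < 1) (w : ℝ) (n : ℕ) :
    qPochhammer w Q n * qPochhammerInf (Q ^ n * w) Q = qPochhammerInf w Q := by
  have hshift : (fun k : ℕ => 1 - Q ^ (k + n) * w) = fun k => 1 - Q ^ k * (Q ^ n * w) := by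
    ext k
    ring
  have hmul : Multipliable fun k : ℕ => 1 - Q ^ (k + n) * w := by
    rw [hshift]
    exact multipliable_one_sub_pow_mul hQ0 hQ1 _
  rw [qPochhammerInf, qPochhammerInf,
    ← Multipliable.prod_mul_tprod_nat_mul' (f := fun k => 1 - Q ^ k * w) hmul, hshift]
  rfl

lemma qPochhammerInf_pos (hQ0 : 0 ≤ Q) (hQ1 : Q < 1) (hw : |w| < 1) : 0 < qPochhammerInf w Q := by
  have hlog : Summable fun k : ℕ => Real.log (1 - Q ^ k * w) := by
    simpa only [sub_eq_add_neg] using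
      Real.summable_log_one_add_of_summable (summable_pow_mul hQ0 hQ1 w).neg
  rw [qPochhammerInf, ← Real.rexp_tsum_eq_tprod (one_sub_pow_mul_pos hQ0 hQ1.le hw) hlog]
  exact Real.exp_pos _

lemma qPochhammerInf_le_qPochhammer (hQ0 : 0 ≤ Q) (hQ1 : Q < 1) (hw0 : 0 ≤ w) (hw1 : w < 1)
    (n : ℕ) : qPochhammerInf w Q ≤ qPochhammer w Q n := by
  have hw : |w| < 1 := by rwa [abs_of_nonneg hw0]
  refine Antitone.le_of_tendsto (antitone_nat_of_succ_le fun m => ?_)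
    (tendsto_qPochhammer hQ0 hQ1 w) n
  rw [qPochhammer_succ]
  refine mul_le_of_le_one_right (qPochhammer_pos hQ0 hQ1.le hw m).le ?_
  linarith [mul_nonneg (pow_nonneg hQ0 m) hw0]

end QPochhammer

section EulerSeries

variable {Q w : ℝ}

lemma norm_pow_div_qPochhammer_le (hQ0 : 0 ≤ Q) (hQ1 : Q < 1) (w : ℝ) (n : ℕ) :
    ‖w ^ n / qPochhammer Q Q n‖ ≤ |w| ^ n / qPochhammerInf Q Q := by
  have hQ : |Q| < 1 := by rwa [abs_of_nonneg hQ0]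
  rw [Real.norm_eq_abs, abs_div, abs_pow, abs_of_pos (qPochhammer_pos hQ0 hQ1.le hQ n)]
  exact div_le_div_of_nonneg_left (by positivity) (qPochhammerInf_pos hQ0 hQ1 hQ)
    (qPochhammerInf_le_qPochhammer hQ0 hQ1 hQ0 hQ1 n)

lemma summable_eulerSeries (hQ0 : 0 ≤ Q) (hQ1 : Q < 1) (hw : |w| < 1) :
    Summable fun n : ℕ => w ^ n / qPochhammer Q Q n :=
  .of_norm_bounded ((summable_geometric_of_lt_one (abs_nonneg w) hw).div_const _)
    (norm_pow_div_qPochhammer_le hQ0 hQ1 w)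

lemma eulerSeries_mul_left (hQ0 : 0 ≤ Q) (hQ1 : Q < 1) (hw : |w| < 1) :
    eulerSeries Q (Q * w) = eulerSeries Q w * (1 - w) := by
  have hQw : |Q * w| < 1 := by
    rw [abs_mul, abs_of_nonneg hQ0]
    exact lt_of_le_of_lt (mul_le_of_le_one_left (abs_nonneg w) hQ1.le) hw
  have hs := (summable_nat_add_iff 1).mpr (summable_eulerSeries hQ0 hQ1 hw)
  have hs' := (summable_nat_add_iff 1).mpr (summable_eulerSeries hQ0 hQ1 hQw)
  -- `(1 - Qⁿ⁺¹)` cancels the last factor of `(Q; Q)ₙ₊₁`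
  have hterm : ∀ n : ℕ, w ^ (n + 1) / qPochhammer Q Q (n + 1) -
      (Q * w) ^ (n + 1) / qPochhammer Q Q (n + 1) = w * (w ^ n / qPochhammer Q Q n) := by
    intro n
    have := (qPochhammer_pos hQ0 hQ1.le (by rwa [abs_of_nonneg hQ0]) n).ne'
    have := (one_sub_pow_mul_pos hQ0 hQ1.le (by rwa [abs_of_nonneg hQ0]) n).ne'
    rw [qPochhammer_succ, mul_pow, pow_succ Q]
    field_simp
    ring
  have hdiff : eulerSeries Q w - eulerSeries Q (Q * w) = w * eulerSeries Q w :=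
    calc eulerSeries Q w - eulerSeries Q (Q * w)
        = ∑' n : ℕ, (w ^ (n + 1) / qPochhammer Q Q (n + 1) -
            (Q * w) ^ (n + 1) / qPochhammer Q Q (n + 1)) := by
          rw [eulerSeries, eulerSeries, (summable_eulerSeries hQ0 hQ1 hw).tsum_eq_zero_add,
            (summable_eulerSeries hQ0 hQ1 hQw).tsum_eq_zero_add, hs.tsum_sub hs', pow_zero,
            pow_zero, add_sub_add_left_eq_sub]
      _ = w * eulerSeries Q w := by rw [tsum_congr hterm, tsum_mul_left, eulerSeries]
  linear_combination -hdiff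

lemma eulerSeries_pow_mul (hQ0 : 0 ≤ Q) (hQ1 : Q < 1) (hw : |w| < 1) (n : ℕ) :
    eulerSeries Q (Q ^ n * w) = eulerSeries Q w * qPochhammer w Q n := by
  induction n with
  | zero => simp
  | succ n ih =>
    have hQnw : |Q ^ n * w| < 1 := by
      rw [abs_mul, abs_of_nonneg (pow_nonneg hQ0 n)]
      exact lt_of_le_of_lt (mul_le_of_le_one_left (abs_nonneg w) (pow_le_one₀ hQ0 hQ1.le)) hw
    rw [pow_succ', mul_assoc, eulerSeries_mul_left hQ0 hQ1 hQnw, ih, qPochhammer_succ, mul_assoc]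

lemma abs_eulerSeries_sub_one_le (hQ0 : 0 ≤ Q) (hQ1 : Q < 1) (hw : |w| ≤ 1 / 2) :
    |eulerSeries Q w - 1| ≤ |w| * (2 / qPochhammerInf Q Q) := by
  have hw1 : |w| < 1 := by linarith
  rw [eulerSeries, (summable_eulerSeries hQ0 hQ1 hw1).tsum_eq_zero_add]
  rw [pow_zero, qPochhammer_zero, div_one, add_sub_cancel_left, ← Real.norm_eq_abs]
  refine tsum_of_norm_bounded ((hasSum_geometric_two.div_const _).mul_left |w|) fun n => ?_
  calc ‖w ^ (n + 1) / qPochhammer Q Q (n + 1)‖ ≤ |w| ^ (n + 1) / qPochhammerInf Q Q :=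
        norm_pow_div_qPochhammer_le hQ0 hQ1 w (n + 1)
    _ ≤ |w| * ((1 / 2) ^ n / qPochhammerInf Q Q) := by
        rw [pow_succ', mul_div_assoc]
        have := qPochhammerInf_pos hQ0 hQ1 (by rwa [abs_of_nonneg hQ0])
        gcongr

lemma tendsto_eulerSeries_zero (hQ0 : 0 ≤ Q) (hQ1 : Q < 1) :
    Tendsto (eulerSeries Q) (𝓝 0) (𝓝 1) := by
  have hbound :
      ∀ᶠ u in 𝓝 (0 : ℝ), ‖eulerSeries Q u - 1‖ ≤ |u| * (2 / qPochhammerInf Q Q) := by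
    filter_upwards [Metric.closedBall_mem_nhds (0 : ℝ) (one_half_pos (α := ℝ))] with u hu
    rw [Metric.mem_closedBall, dist_zero_right, Real.norm_eq_abs] at hu
    exact abs_eulerSeries_sub_one_le hQ0 hQ1 hu
  have hlim : Tendsto (fun u : ℝ => |u| * (2 / qPochhammerInf Q Q)) (𝓝 0) (𝓝 0) := by
    simpa using (continuous_abs.tendsto' (0 : ℝ) 0 abs_zero).mul_const (2 / qPochhammerInf Q Q)
  exact tendsto_sub_nhds_zero_iff.mp (squeeze_zero_norm' hbound hlim)

theorem eulerSeries_mul_qPochhammerInf (hQ0 : 0 ≤ Q) (hQ1 : Q < 1) (hw : |w| < 1) :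
    eulerSeries Q w * qPochhammerInf w Q = 1 := by
  have hpow : Tendsto (fun n : ℕ => Q ^ n * w) atTop (𝓝 0) := by
    simpa using (tendsto_pow_atTop_nhds_zero_of_lt_one hQ0 hQ1).mul_const w
  have hlim : Tendsto (fun n => eulerSeries Q (Q ^ n * w)) atTop
      (𝓝 (eulerSeries Q w * qPochhammerInf w Q)) := by
    simpa only [eulerSeries_pow_mul hQ0 hQ1 hw] using
      (tendsto_qPochhammer hQ0 hQ1 w).const_mul (eulerSeries Q w)
  exact tendsto_nhds_unique hlim ((tendsto_eulerSeries_zero hQ0 hQ1).comp hpow)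

end EulerSeries

lemma tsum_int_eq_tsum_nat_neg {M : Type*} [AddCommMonoid M] [TopologicalSpace M] {f : ℤ → M}
    (hf : ∀ d, 0 < d → f d = 0) : ∑' d, f d = ∑' n : ℕ, f (-n) := by
  refine ((neg_injective.comp Nat.cast_injective).tsum_eq fun d hd => ?_).symm
  obtain ⟨n, rfl⟩ := Int.exists_eq_neg_ofNat (not_lt.mp fun h => hd (hf d h))
  exact ⟨n, rfl⟩

lemma tprod_one_sub_inv_pow_succ_mul_zpow_eq_zero {q : ℝ} (hq : q ≠ 0) {d : ℤ} (hd : 0 < d) :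
    ∏' r : ℕ, (1 - q⁻¹ ^ (r + 1) * q ^ d) = 0 := by
  obtain ⟨n, rfl⟩ := Int.eq_succ_of_zero_lt hd
  refine tprod_of_exists_eq_zero ⟨n, ?_⟩
  rw [← Nat.cast_succ, zpow_natCast, inv_pow, inv_mul_cancel₀ (pow_ne_zero _ hq), sub_self]

lemma tprod_one_sub_pow_succ_mul_pow {Q : ℝ} (hQ0 : 0 ≤ Q) (hQ1 : Q < 1) (n : ℕ) :
    ∏' r : ℕ, (1 - Q ^ (r + 1) * Q ^ n) = qPochhammerInf Q Q / qPochhammer Q Q n := by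
  have hQ : |Q| < 1 := by rwa [abs_of_nonneg hQ0]
  rw [eq_div_iff (qPochhammer_pos hQ0 hQ1.le hQ n).ne', mul_comm,
    ← qPochhammer_mul_qPochhammerInf hQ0 hQ1 Q n, qPochhammerInf]
  congr 2 with r
  ring

/-- Koelink–Koornwinder Jackson-integral representation of the q-gamma function: for real
`q > 1` and `p > 0`,
`Γ_{q⁻¹}(p) = (1-q⁻¹)^{1-p} ∑_{d∈ℤ} E_{q⁻¹}(q^d/(1-q)) q^{dp}`,
where `Γ_{q⁻¹}(p) = (1-q⁻¹)^{1-p} (q⁻¹;q⁻¹)_∞/(q^{-p};q⁻¹)_∞` and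
`E_{q⁻¹}(q^d/(1-q)) = (q⁻¹·q^d; q⁻¹)_∞`. -/
theorem stmt9 (q : ℝ) (hq : 1 < q) (p : ℝ) (hp : 0 < p) :
    (1 - q⁻¹) ^ (1 - p) *
        ((∏' r : ℕ, (1 - q⁻¹ ^ (r + 1))) / ∏' r : ℕ, (1 - q⁻¹ ^ r * q ^ (-p))) =
      (1 - q⁻¹) ^ (1 - p) *
        ∑' d : ℤ, (∏' r : ℕ, (1 - q⁻¹ ^ (r + 1) * q ^ d)) * q ^ ((d : ℝ) * p) := by
  have hq0 : 0 < q := by linarith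
  have hQ0 : 0 ≤ q⁻¹ := inv_nonneg.mpr hq0.le
  have hQ1 : q⁻¹ < 1 := inv_lt_one_of_one_lt₀ hq
  have hz : |q ^ (-p)| < 1 := by
    rw [abs_of_pos (Real.rpow_pos_of_pos hq0 _)]
    exact Real.rpow_lt_one_of_one_lt_of_neg hq (neg_neg_of_pos hp)
  have hterm (n : ℕ) :
      (∏' r : ℕ, (1 - q⁻¹ ^ (r + 1) * q ^ (-(n : ℤ)))) * q ^ (((-n : ℤ) : ℝ) * p) =
        qPochhammerInf q⁻¹ q⁻¹ * ((q ^ (-p)) ^ n / qPochhammer q⁻¹ q⁻¹ n) := by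
    rw [zpow_neg, zpow_natCast, ← inv_pow, tprod_one_sub_pow_succ_mul_pow hQ0 hQ1 n,
      ← Real.rpow_natCast, ← Real.rpow_mul hq0.le]
    push_cast
    ring_nf
  rw [tsum_int_eq_tsum_nat_neg fun d hd => by
      rw [tprod_one_sub_inv_pow_succ_mul_zpow_eq_zero hq0.ne' hd, zero_mul],
    tsum_congr hterm, tsum_mul_left, ← eulerSeries,
    eq_inv_of_mul_eq_one_left (eulerSeries_mul_qPochhammerInf hQ0 hQ1 hz)]
  simp only [qPochhammerInf, pow_succ, div_eq_mul_inv]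
end

section
/- Let q > 1 be real, and let f : q^ℤ → ℂ have absolutely convergent q-Mellin transform M_q f(p) = ∑_{n∈ℤ} f(q^n) q^{np} on the strip u < Re(p) < v. Then for any ε in that strip and any x = q^m ∈ q^ℤ, f(x) = (log q)/(2πi) ∫_{ε − iπ/log q}^{ε + iπ/log q} M_q f(p) x^{−p} dp. -/
/-!
On the vertical line `p = ε + t i` the integrand is `∑ₙ aₙ e^{i (n - m) t log q}` with
`aₙ = f(qⁿ) q^{(n - m) ε}` absolutely summable: an absolutely convergent Fourier series in `t` of
period `2π / log q`. Integrating it term by term over one period kills every term except `n = m`.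
-/

open Complex

theorem intervalIntegral_tsum_of_norm_le {ι E : Type*} [Countable ι] [NormedAddCommGroup E]
    [NormedSpace ℝ E] [CompleteSpace E] {F : ι → ℝ → E} {b : ι → ℝ} {a c : ℝ}
    (hF : ∀ n, Continuous (F n)) (hb : Summable b) (hFb : ∀ n t, ‖F n t‖ ≤ b n) :
    ∫ t in a..c, ∑' n, F n t = ∑' n, ∫ t in a..c, F n t := by
  have : Nonempty (Set.uIcc a c) := Set.nonempty_uIcc.to_subtype
  refine (intervalIntegral.tsum_intervalIntegral_eq_of_summable_norm
    (f := fun n => ⟨F n, hF n⟩) (hb.of_nonneg_of_le (fun _ => norm_nonneg _) fun n => ?_)).symm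
  exact (ContinuousMap.norm_le _ ((norm_nonneg _).trans (hFb n a))).mpr fun t => hFb n t

theorem integral_exp_int_mul_mul_I {L : ℝ} (hL : L ≠ 0) (k : ℤ) :
    ∫ t in -(Real.pi / L)..(Real.pi / L), cexp (k * L * t * I) =
      if k = 0 then ((2 * Real.pi / L : ℝ) : ℂ) else 0 := by
  have hL' : (L : ℂ) ≠ 0 := ofReal_ne_zero.mpr hL
  split_ifs with hk
  · simp [hk]
    ring
  · have hc : (k * L * I : ℂ) ≠ 0 := by simp [hk, hL]
    have hperiod : cexp (k * L * I * (Real.pi / L : ℝ)) =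
        cexp (k * L * I * (-(Real.pi / L) : ℝ)) := by
      refine exp_eq_exp_iff_exists_int.mpr ⟨k, ?_⟩
      push_cast
      field_simp
      ring
    simp_rw [show ∀ t : ℝ, (k * L * t * I : ℂ) = k * L * I * t from fun t => by ring]
    rw [integral_exp_mul_complex hc, hperiod, sub_self, zero_div]

theorem ofReal_cpow_mul_add_mul_I {q : ℝ} (hq : 0 < q) (n m : ℂ) (ε t : ℝ) :
    (q : ℂ) ^ (n * (ε + t * I)) * (q : ℂ) ^ (-m * (ε + t * I)) =
      (q : ℂ) ^ (n * ε) * (q : ℂ) ^ (-m * ε) * cexp ((n - m) * Real.log q * t * I) := by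
  have hq' : (q : ℂ) ≠ 0 := ofReal_ne_zero.mpr hq.ne'
  simp only [cpow_def_of_ne_zero hq', ← ofReal_log hq.le, ← Complex.exp_add]
  ring_nf

theorem tsum_mul_ofReal_cpow_eq_tsum_mul_cexp {q : ℝ} (hq : 0 < q) (f : ℝ → ℂ) (m : ℤ)
    (ε t : ℝ) :
    (∑' n : ℤ, f (q ^ n) * (q : ℂ) ^ ((n : ℂ) * (ε + t * I))) * (q : ℂ) ^ (-(m : ℂ) * (ε + t * I)) =
      ∑' n : ℤ, f (q ^ n) * (q : ℂ) ^ ((n : ℂ) * ε) * (q : ℂ) ^ (-(m : ℂ) * ε) *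
        cexp ((n - m : ℤ) * Real.log q * t * I) := by
  rw [← tsum_mul_right]
  congr 1 with n
  rw [mul_assoc, ofReal_cpow_mul_add_mul_I hq]
  push_cast
  ring

theorem norm_mul_cexp_int_mul_mul_I (z : ℂ) (k : ℤ) (L t : ℝ) :
    ‖z * cexp (k * L * t * I)‖ = ‖z‖ := by
  rw [norm_mul, ← ofReal_intCast, ← ofReal_mul, ← ofReal_mul, norm_exp_ofReal_mul_I, mul_one]

open Complex in
/-- q-Mellin inversion formula: if the q-Mellin transform
`M_q f(p) = ∑_{n∈ℤ} f(q^n) q^{np}` of `f : q^ℤ → ℂ` converges absolutely on the strip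
`u < Re p < v`, then for any `ε` in `(u,v)` and any `x = q^m ∈ q^ℤ`,
`f(x) = (log q)/(2πi) ∫_{ε-iπ/log q}^{ε+iπ/log q} M_q f(p) x^{-p} dp`. -/
theorem stmt11 (q : ℝ) (hq : 1 < q) (f : ℝ → ℂ) (u v : ℝ)
    (hconv : ∀ p : ℂ, u < p.re → p.re < v →
      Summable (fun n : ℤ => ‖f (q ^ n) * (q : ℂ) ^ ((n : ℂ) * p)‖))
    (ε : ℝ) (hε1 : u < ε) (hε2 : ε < v) (m : ℤ) :
    f (q ^ m) = (Real.log q : ℂ) / (2 * (Real.pi : ℂ) * Complex.I) *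
      (Complex.I * ∫ t in (-(Real.pi / Real.log q))..(Real.pi / Real.log q),
        (∑' n : ℤ, f (q ^ n) * (q : ℂ) ^ ((n : ℂ) * ((ε : ℂ) + (t : ℂ) * Complex.I))) *
          (q : ℂ) ^ (-(m : ℂ) * ((ε : ℂ) + (t : ℂ) * Complex.I))) := by
  have hq0 : 0 < q := zero_lt_one.trans hq
  have hL : Real.log q ≠ 0 := (Real.log_pos hq).ne'
  set a : ℤ → ℂ := fun n => f (q ^ n) * (q : ℂ) ^ ((n : ℂ) * ε) * (q : ℂ) ^ (-(m : ℂ) * ε)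
  have ha : Summable fun n => ‖a n‖ := by
    simpa only [a, norm_mul] using
      (hconv ε (by simpa using hε1) (by simpa using hε2)).mul_right ‖(q : ℂ) ^ (-(m : ℂ) * ε)‖
  rw [intervalIntegral.integral_congr fun t _ => tsum_mul_ofReal_cpow_eq_tsum_mul_cexp hq0 f m ε t,
    intervalIntegral_tsum_of_norm_le (fun n => by fun_prop) ha
      fun n t => (norm_mul_cexp_int_mul_mul_I (a n) _ _ t).le]
  simp_rw [intervalIntegral.integral_const_mul, integral_exp_int_mul_mul_I hL, sub_eq_zero,
    mul_ite, mul_zero]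
  rw [tsum_ite_eq]
  have hcancel : (q : ℂ) ^ ((m : ℂ) * ε) * (q : ℂ) ^ (-(m : ℂ) * ε) = 1 := by
    have hq' : (q : ℂ) ≠ 0 := ofReal_ne_zero.mpr hq0.ne'
    rw [neg_mul, cpow_neg, mul_inv_cancel₀ (cpow_ne_zero_iff.mpr (Or.inl hq'))]
  have hL' : (Real.log q : ℂ) ≠ 0 := ofReal_ne_zero.mpr hL
  simp only [a, mul_assoc, hcancel]
  push_cast
  field_simp
end

section
/- Let q_k > 1 be the unique real root of q^{k+1} − q^k − 1 = 0. Then for every real Q > 0 there exists a sequence of integers b_k such that q_k^{b_k} → Q as k → ∞. -/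
/-!
From `q ^ k * (q - 1) = 1` and Bernoulli's inequality `q ^ k ≥ 1 + k (q - 1)` one gets
`k (q - 1) ^ 2 ≤ 1`, so `q_k → 1` and `a_k := log q_k → 0⁺`. Taking `b_k := ⌊log Q / a_k⌋`
gives `log Q - a_k < a_k b_k ≤ log Q`, hence `q_k ^ b_k = exp (a_k b_k) → Q`.
-/

open Filter Topology Real

lemma sub_one_sq_mul_le_one {q : ℝ} (hq : 1 ≤ q) {k : ℕ} (h : q ^ k * (q - 1) = 1) :
    (q - 1) ^ 2 * k ≤ 1 := by
  have hbern : 1 + k * (q - 1) ≤ q ^ k := by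
    simpa using one_add_mul_le_pow (a := q - 1) (by linarith) k
  nlinarith [mul_le_mul_of_nonneg_right hbern (sub_nonneg.mpr hq)]

lemma tendsto_one_of_pow_mul_sub_one_eq_one {q : ℕ → ℝ}
    (hq : ∀ᶠ k in atTop, 1 ≤ q k ∧ q k ^ k * (q k - 1) = 1) : Tendsto q atTop (𝓝 1) := by
  have hsqrt : Tendsto (fun k : ℕ => 1 + √(1 / k)) atTop (𝓝 1) := by
    simpa using tendsto_const_nhds.add
      ((continuous_sqrt.tendsto 0).comp tendsto_one_div_atTop_nhds_zero_nat)
  refine tendsto_of_tendsto_of_tendsto_of_le_of_le' tendsto_const_nhds hsqrt ?_ ?_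
  · filter_upwards [hq] with k hk using hk.1
  · filter_upwards [hq, eventually_gt_atTop 0] with k ⟨h1, hroot⟩ hk
    have hk' : (0 : ℝ) < k := Nat.cast_pos.mpr hk
    have hsq : (q k - 1) ^ 2 ≤ 1 / k := by
      rw [le_div_iff₀ hk']
      exact sub_one_sq_mul_le_one h1 hroot
    linarith [Real.le_sqrt_of_sq_le hsq]

lemma tendsto_zpow_floor_log_div_log {ι : Type*} {l : Filter ι} {q : ι → ℝ}
    (hq1 : ∀ᶠ i in l, 1 < q i) (hq : Tendsto q l (𝓝 1)) {Q : ℝ} (hQ : 0 < Q) :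
    Tendsto (fun i => q i ^ ⌊log Q / log (q i)⌋) l (𝓝 Q) := by
  have hlog : Tendsto (fun i => log (q i)) l (𝓝 0) := by
    simpa [Function.comp_def] using (continuousAt_log one_ne_zero).tendsto.comp hq
  have hexponent : Tendsto (fun i => (⌊log Q / log (q i)⌋ : ℝ) * log (q i)) l (𝓝 (log Q)) := by
    refine tendsto_of_tendsto_of_tendsto_of_le_of_le' (g := fun i => log Q - log (q i))
      (by simpa using tendsto_const_nhds.sub hlog) tendsto_const_nhds ?_ ?_
    · filter_upwards [hq1] with i hi
      have := (div_lt_iff₀ (log_pos hi)).mp (Int.lt_floor_add_one (log Q / log (q i)))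
      linarith
    · filter_upwards [hq1] with i hi
      exact (le_div_iff₀ (log_pos hi)).mp (Int.floor_le _)
  have hexp := (continuous_exp.tendsto _).comp hexponent
  rw [exp_log hQ] at hexp
  refine hexp.congr' ?_
  filter_upwards [hq1] with i hi
  rw [Function.comp_apply, ← rpow_intCast, rpow_def_of_pos (by linarith), mul_comm]

/-- Let `q_k > 1` be the unique real root of `q^{k+1} - q^k - 1 = 0`. For every real `Q > 0`
there is a sequence of integers `b_k` with `q_k^{b_k} → Q` as `k → ∞`. -/
theorem stmt14 (Qk : ℕ → ℝ)
    (hQk : ∀ k : ℕ, 1 ≤ k → 1 < Qk k ∧ Qk k ^ (k + 1) - Qk k ^ k - 1 = 0)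
    (Q : ℝ) (hQ : 0 < Q) :
    ∃ b : ℕ → ℤ, Filter.Tendsto (fun k => Qk k ^ b k) Filter.atTop (nhds Q) := by
  have hgt : ∀ᶠ k in atTop, 1 < Qk k :=
    (eventually_ge_atTop 1).mono fun k hk => (hQk k hk).1
  have hlim : Tendsto Qk atTop (𝓝 1) := by
    refine tendsto_one_of_pow_mul_sub_one_eq_one ?_
    filter_upwards [eventually_ge_atTop 1] with k hk
    obtain ⟨h1, hroot⟩ := hQk k hk
    exact ⟨h1.le, by linear_combination hroot⟩
  exact ⟨_, tendsto_zpow_floor_log_div_log hgt hlim hQ⟩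
end
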